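/- Null persistence under conditioning: if f : 𝒮 → [0,∞] satisfies Īf = 0 and k ≥ 0, then Ī(Ī_k f) ≤ Īf; hence Ī_k f is a null function whenever f is a null function, i.e., Ī_k f = 0 holds Ī-almost everywhere. -/

import Mathlib

open Filter Set
open scoped Classical ENNReal

noncomputable section

abbrev Traj := ℕ → ℝ

/-- Portfolio value `Π^{V,H}_{j,n}`. -/
def PiVal (j n : ℕ) (V : ℝ) (H : ℕ → Traj → ℝ) (y : Traj) : ℝ :=
  V + ∑ i ∈ Finset.Ico j n, H i y * (y (i + 1) - y i)

/-- Non-anticipativity of a sequence of functions on a set of trajectories. -/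
def NonAnticipOn (A : Set Traj) (H : ℕ → Traj → ℝ) : Prop :=
  ∀ i, ∀ x ∈ A, ∀ y ∈ A, (∀ k ≤ i, x k = y k) → H i x = H i y

/-- Non-anticipativity (at time `j`) of a single extended-real-valued function. -/
def NonAnticipF (A : Set Traj) (j : ℕ) (g : Traj → EReal) : Prop :=
  ∀ x ∈ A, ∀ y ∈ A, (∀ k ≤ j, x k = y k) → g x = g y

/-- Conditional space `𝒮_{(x,j)}`. -/
def Cond (𝒮 : Set Traj) (x : Traj) (j : ℕ) : Set Traj :=
  {y ∈ 𝒮 | ∀ i ≤ j, y i = x i}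

/-- `liminf_{n→∞} Π^{V,H}_{j,n}` as a value in `[0,∞]`. -/
def limInfVal (j : ℕ) (V : ℝ) (H : ℕ → Traj → ℝ) (y : Traj) : ℝ≥0∞ :=
  Filter.liminf (fun n => ENNReal.ofReal (PiVal j n V H y)) Filter.atTop

/-- The conditional null operator `Ī_j` on a set `A` of trajectories. -/
def IUpOn (A : Set Traj) (j : ℕ) (f : Traj → ℝ≥0∞) : ℝ≥0∞ :=
  sInf { c | ∃ (V : ℕ → ℝ) (H : ℕ → ℕ → Traj → ℝ),
    (∀ m, NonAnticipOn A (H m)) ∧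
    (∀ m n, ∀ y ∈ A, 0 ≤ PiVal j n (V m) (H m) y) ∧
    (∀ y ∈ A, f y ≤ ∑' m, limInfVal j (V m) (H m) y) ∧
    c = ∑' m, ENNReal.ofReal (V m) }

/-- `Ī_j f (x)`, conditioned on the node `(x,j)`. -/
def IUp (𝒮 : Set Traj) (j : ℕ) (f : Traj → ℝ≥0∞) (x : Traj) : ℝ≥0∞ :=
  IUpOn (Cond 𝒮 x j) j f

/-- The conditional superhedging outer integral on a set `A`, starting at time `j`. -/
def sigmaUpOn (A : Set Traj) (j : ℕ) (f : Traj → EReal) : EReal :=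
  sInf { c : EReal | ∃ (V0 : ℝ) (H0 : ℕ → Traj → ℝ) (n0 : ℕ) (V : ℕ → ℝ)
      (H : ℕ → ℕ → Traj → ℝ),
    NonAnticipOn A H0 ∧ (∀ m, NonAnticipOn A (H m)) ∧
    (∀ m n, ∀ y ∈ A, 0 ≤ PiVal j n (V m) (H m) y) ∧
    (∀ y ∈ A, f y ≤ (PiVal j n0 V0 H0 y : EReal) +
      ((∑' m, limInfVal j (V m) (H m) y : ℝ≥0∞) : EReal)) ∧
    c = (V0 : EReal) + ((∑' m, ENNReal.ofReal (V m) : ℝ≥0∞) : EReal) }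

/-- `σ̄_j f (x)`. -/
def sigmaUp (𝒮 : Set Traj) (j : ℕ) (f : Traj → EReal) (x : Traj) : EReal :=
  sigmaUpOn (Cond 𝒮 x j) j f

/-- `σ̲_j f (x) = -σ̄_j (-f)(x)`. -/
def sigmaDown (𝒮 : Set Traj) (j : ℕ) (f : Traj → EReal) (x : Traj) : EReal :=
  - sigmaUp 𝒮 j (fun y => - f y) x

/-- A set is `Ī`-null. -/
def NullSet (𝒮 : Set Traj) (E : Set Traj) : Prop :=
  IUpOn 𝒮 0 (fun y => if y ∈ E then 1 else 0) = 0

/-- A property holds `Ī`-almost everywhere on `𝒮`. -/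
def AEOn (𝒮 : Set Traj) (P : Traj → Prop) : Prop :=
  NullSet 𝒮 {y ∈ 𝒮 | ¬ P y}

/-- Property `(L_{(x,j)})`, continuity from below at the node `(x,j)`. -/
def PropL (𝒮 : Set Traj) (x : Traj) (j : ℕ) : Prop :=
  ∀ (V0 : ℝ) (H0 : ℕ → Traj → ℝ) (n0 : ℕ) (V : ℕ → ℝ) (H : ℕ → ℕ → Traj → ℝ),
    NonAnticipOn (Cond 𝒮 x j) H0 → (∀ m, NonAnticipOn (Cond 𝒮 x j) (H m)) →
    (∀ m n, ∀ y ∈ Cond 𝒮 x j, 0 ≤ PiVal j n (V m) (H m) y) →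
    (∀ y ∈ Cond 𝒮 x j, (PiVal j n0 V0 H0 y : EReal) ≤
      ((∑' m, limInfVal j (V m) (H m) y : ℝ≥0∞) : EReal)) →
    (V0 : EReal) ≤ ((∑' m, ENNReal.ofReal (V m) : ℝ≥0∞) : EReal)

/-- Assumption `(L)`-a.e. -/
def LaeAssumption (𝒮 : Set Traj) : Prop :=
  (∀ x ∈ 𝒮, PropL 𝒮 x 0) ∧ NullSet 𝒮 {x ∈ 𝒮 | ∃ j, ¬ PropL 𝒮 x j}

/-- Up-down node. -/
def UpDownNode (𝒮 : Set Traj) (x : Traj) (j : ℕ) : Prop :=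
  (∃ y ∈ Cond 𝒮 x j, x j < y (j + 1)) ∧ (∃ y ∈ Cond 𝒮 x j, y (j + 1) < x j)

/-- Flat node. -/
def FlatNode (𝒮 : Set Traj) (x : Traj) (j : ℕ) : Prop :=
  ∀ y ∈ Cond 𝒮 x j, y (j + 1) = x j

/-- Arbitrage node. -/
def ArbitrageNode (𝒮 : Set Traj) (x : Traj) (j : ℕ) : Prop :=
  ¬ UpDownNode 𝒮 x j ∧ ¬ FlatNode 𝒮 x j

/-- Type II arbitrage node. -/
def TypeIINode (𝒮 : Set Traj) (x : Traj) (j : ℕ) : Prop :=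
  ArbitrageNode 𝒮 x j ∧ ¬ ∃ y ∈ Cond 𝒮 x j, y (j + 1) = x j

/-- Trajectory based stopping time. -/
def StoppingTime (𝒮 : Set Traj) (τ : Traj → ℕ∞) : Prop :=
  ∀ x ∈ 𝒮, ∀ y ∈ 𝒮, (∀ k : ℕ, (k : ℕ∞) ≤ τ x → x k = y k) → τ x = τ y

/-- `⊤`-dominant addition on `EReal`, implementing the convention `∞ + (−∞) = ∞`. -/
def eadd (a b : EReal) : EReal := if a = ⊤ ∨ b = ⊤ then ⊤ else a + b

/-- Subtraction `u − v = u + (−v)` with the convention `∞ + (−∞) = ∞`. -/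
def esub (a b : EReal) : EReal := eadd a (-b)

/-- Supermartingale. -/
def TrajSupermartingale (𝒮 : Set Traj) (f : ℕ → Traj → EReal) : Prop :=
  (∀ j, NonAnticipF 𝒮 j (f j)) ∧
  ∀ j, AEOn 𝒮 (fun x => sigmaUp 𝒮 j (f (j + 1)) x ≤ f j x)

/-! A superhedge of `f` from time `0` that simply stops trading at time `k` is worth
`Π_{0,k}(x)` at the node `(x,k)`, and continuing it from there superhedges `f` on `𝒮_{(x,k)}`;
so it superhedges `Ī_k f` at the same initial cost, giving `Ī(Ī_k f) ≤ Ī f`. For the second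
claim, `Ī` is countably subadditive (glue countably many cheap superhedges into one), and
`1_{Ī_k f ≠ 0} ≤ ∑_{p ∈ ℕ} Ī_k f`, so `Ī(Ī_k f) = 0` makes `{Ī_k f ≠ 0}` a null set. -/

section Portfolio

variable {A B : Set Traj} {j k n : ℕ} {V : ℝ} {H : ℕ → Traj → ℝ}

lemma PiVal_of_le (h : n ≤ j) (V : ℝ) (H : ℕ → Traj → ℝ) (y : Traj) :
    PiVal j n V H y = V := by
  simp [PiVal, Finset.Ico_eq_empty_of_le h]

lemma PiVal_PiVal (hjk : j ≤ k) (hkn : k ≤ n) (V : ℝ) (H : ℕ → Traj → ℝ) (y : Traj) :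
    PiVal k n (PiVal j k V H y) H y = PiVal j n V H y := by
  simp only [PiVal, add_assoc, Finset.sum_Ico_consecutive _ hjk hkn]

lemma NonAnticipOn.mono (hH : NonAnticipOn A H) (hBA : B ⊆ A) : NonAnticipOn B H :=
  fun i x hx y hy => hH i x (hBA hx) y (hBA hy)

lemma NonAnticipOn.PiVal_eq (hH : NonAnticipOn A H) {x y : Traj} (hx : x ∈ A) (hy : y ∈ A)
    (hxy : ∀ i ≤ n, x i = y i) : PiVal j n V H x = PiVal j n V H y := by
  refine congrArg (V + ·) (Finset.sum_congr rfl fun i hi => ?_)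
  have hin : i + 1 ≤ n := (Finset.mem_Ico.1 hi).2
  rw [hH i x hx y hy fun l hl => hxy l (by omega), hxy i (by omega), hxy (i + 1) hin]

lemma NonAnticipOn.limInfVal_eq (hH : NonAnticipOn A H) (hjk : j ≤ k) {x y : Traj}
    (hx : x ∈ A) (hy : y ∈ A) (hyx : ∀ i ≤ k, y i = x i) :
    limInfVal k (PiVal j k V H x) H y = limInfVal j V H y := by
  refine liminf_congr ?_
  filter_upwards [eventually_ge_atTop k] with n hkn
  rw [← hH.PiVal_eq hy hx hyx, PiVal_PiVal hjk hkn]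

def stopAt (k : ℕ) (H : ℕ → Traj → ℝ) : ℕ → Traj → ℝ :=
  fun i y => if i < k then H i y else 0

lemma NonAnticipOn.stopAt (hH : NonAnticipOn A H) : NonAnticipOn A (stopAt k H) := by
  intro i x hx y hy hxy
  simp only [_root_.stopAt, hH i x hx y hy hxy]

lemma PiVal_stopAt (y : Traj) : PiVal j n V (stopAt k H) y = PiVal j (min n k) V H y := by
  have hIco : (Finset.Ico j n).filter (· < k) = Finset.Ico j (min n k) := by
    ext i
    simp only [Finset.mem_filter, Finset.mem_Ico]
    omega
  simp only [PiVal, stopAt, ite_mul, zero_mul, ← Finset.sum_filter, hIco]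

lemma limInfVal_stopAt (y : Traj) :
    limInfVal j V (stopAt k H) y = ENNReal.ofReal (PiVal j k V H y) := by
  refine (liminf_congr ?_).trans (liminf_const _)
  filter_upwards [eventually_ge_atTop k] with n hkn
  rw [PiVal_stopAt, min_eq_right hkn]

end Portfolio

/-- A candidate `(V, H)` in the infimum defining `IUpOn A j f`. -/
structure SuperhedgesOn (A : Set Traj) (j : ℕ) (f : Traj → ℝ≥0∞) (V : ℕ → ℝ)
    (H : ℕ → ℕ → Traj → ℝ) : Prop where
  nonAnticipOn : ∀ m, NonAnticipOn A (H m)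
  nonneg : ∀ m n, ∀ y ∈ A, 0 ≤ PiVal j n (V m) (H m) y
  le_tsum : ∀ y ∈ A, f y ≤ ∑' m, limInfVal j (V m) (H m) y

section Superhedge

variable {A : Set Traj} {j k : ℕ} {f g : Traj → ℝ≥0∞} {V : ℕ → ℝ} {H : ℕ → ℕ → Traj → ℝ}

lemma IUpOn_le (h : SuperhedgesOn A j f V H) : IUpOn A j f ≤ ∑' m, ENNReal.ofReal (V m) :=
  sInf_le ⟨V, H, h.1, h.2, h.3, rfl⟩

lemma le_IUpOn {c : ℝ≥0∞}
    (h : ∀ V H, SuperhedgesOn A j f V H → c ≤ ∑' m, ENNReal.ofReal (V m)) :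
    c ≤ IUpOn A j f :=
  le_sInf <| by
    rintro _ ⟨V, H, h₁, h₂, h₃, rfl⟩
    exact h V H ⟨h₁, h₂, h₃⟩

lemma exists_superhedgesOn_lt {c : ℝ≥0∞} (h : IUpOn A j f < c) :
    ∃ V H, SuperhedgesOn A j f V H ∧ ∑' m, ENNReal.ofReal (V m) < c := by
  obtain ⟨_, ⟨V, H, h₁, h₂, h₃, rfl⟩, hc⟩ := sInf_lt_iff.1 h
  exact ⟨V, H, ⟨h₁, h₂, h₃⟩, hc⟩

lemma IUpOn_mono (hfg : ∀ y ∈ A, f y ≤ g y) : IUpOn A j f ≤ IUpOn A j g :=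
  le_IUpOn fun _ _ h => IUpOn_le ⟨h.1, h.2, fun y hy => (hfg y hy).trans (h.3 y hy)⟩

lemma SuperhedgesOn.IUpOn_cond_le (h : SuperhedgesOn A j f V H) (hjk : j ≤ k) {x : Traj}
    (hx : x ∈ A) : IUpOn (Cond A x k) k f ≤ ∑' m, ENNReal.ofReal (PiVal j k (V m) (H m) x) := by
  refine IUpOn_le ⟨fun m => (h.1 m).mono fun y hy => hy.1, fun m n y hy => ?_, fun y hy => ?_⟩
  · rcases le_or_gt k n with hkn | hnk
    · rw [← (h.1 m).PiVal_eq hy.1 hx hy.2, PiVal_PiVal hjk hkn]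
      exact h.2 m n y hy.1
    · rw [PiVal_of_le hnk.le]
      exact h.2 m k x hx
  · exact (h.3 y hy.1).trans_eq
      (tsum_congr fun m => ((h.1 m).limInfVal_eq hjk hx hy.1 hy.2).symm)

lemma SuperhedgesOn.stopAt (h : SuperhedgesOn A j f V H) (hjk : j ≤ k) :
    SuperhedgesOn A j (fun x => IUpOn (Cond A x k) k f) V (fun m => stopAt k (H m)) := by
  refine ⟨fun m => (h.1 m).stopAt, fun m n y hy => ?_, fun x hx => ?_⟩
  · rw [PiVal_stopAt]
    exact h.2 m _ y hy
  · simp only [limInfVal_stopAt]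
    exact h.IUpOn_cond_le hjk hx

theorem IUpOn_IUpOn_cond_le (hjk : j ≤ k) :
    IUpOn A j (fun x => IUpOn (Cond A x k) k f) ≤ IUpOn A j f :=
  le_IUpOn fun _ _ h => IUpOn_le (h.stopAt hjk)

lemma tsum_unpair (g : ℕ → ℕ → ℝ≥0∞) :
    ∑' n : ℕ, g n.unpair.1 n.unpair.2 = ∑' p, ∑' m, g p m :=
  (Nat.pairEquiv.symm.tsum_eq fun p => g p.1 p.2).trans ENNReal.tsum_prod

lemma SuperhedgesOn.tsum {f : ℕ → Traj → ℝ≥0∞} {V : ℕ → ℕ → ℝ} {H : ℕ → ℕ → ℕ → Traj → ℝ}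
    (h : ∀ p, SuperhedgesOn A j (f p) (V p) (H p)) :
    SuperhedgesOn A j (fun y => ∑' p, f p y) (fun n => V n.unpair.1 n.unpair.2)
      (fun n => H n.unpair.1 n.unpair.2) := by
  refine ⟨fun n => (h _).1 _, fun n i y hy => (h _).2 _ i y hy, fun y hy => ?_⟩
  rw [tsum_unpair fun p m => limInfVal j (V p m) (H p m) y]
  exact ENNReal.tsum_le_tsum fun p => (h p).3 y hy

theorem IUpOn_tsum_le (f : ℕ → Traj → ℝ≥0∞) :
    IUpOn A j (fun y => ∑' p, f p y) ≤ ∑' p, IUpOn A j (f p) := by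
  refine ENNReal.le_of_forall_pos_le_add fun ε hε hfin => ?_
  obtain ⟨δ, hδ, hδε⟩ := ENNReal.exists_pos_sum_of_countable' (ENNReal.coe_ne_zero.2 hε.ne') ℕ
  have hlt (p : ℕ) : IUpOn A j (f p) < IUpOn A j (f p) + δ p :=
    ENNReal.lt_add_right (ne_top_of_le_ne_top hfin.ne (ENNReal.le_tsum p)) (hδ p).ne'
  choose V H hVH hcost using fun p => exists_superhedgesOn_lt (hlt p)
  calc IUpOn A j (fun y => ∑' p, f p y)
      ≤ ∑' n, ENNReal.ofReal (V n.unpair.1 n.unpair.2) := IUpOn_le (SuperhedgesOn.tsum hVH)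
    _ = ∑' p, ∑' m, ENNReal.ofReal (V p m) := tsum_unpair fun p m => ENNReal.ofReal (V p m)
    _ ≤ ∑' p, (IUpOn A j (f p) + δ p) := ENNReal.tsum_le_tsum fun p => (hcost p).le
    _ ≤ ∑' p, IUpOn A j (f p) + ε := by
      rw [ENNReal.tsum_add]
      exact add_le_add le_rfl hδε.le

theorem AEOn_eq_zero_of_IUpOn_eq_zero {𝒮 : Set Traj} (hg : IUpOn 𝒮 0 g = 0) :
    AEOn 𝒮 (fun x => g x = 0) := by
  have hsum : IUpOn 𝒮 0 (fun y => ∑' _ : ℕ, g y) = 0 :=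
    nonpos_iff_eq_zero.1 ((IUpOn_tsum_le fun _ => g).trans_eq (by simp [hg]))
  refine nonpos_iff_eq_zero.1 ((IUpOn_mono fun y _ => ?_).trans hsum.le)
  split_ifs with hy
  · rw [ENNReal.tsum_const_eq_top_of_ne_zero hy.2]
    exact le_top
  · exact zero_le

end Superhedge

/-- `Ī(Ī_k f) ≤ Ī f` for nonnegative `f`; hence if `f` is a null
function, then `Ī_k f = 0` holds `Ī`-almost everywhere. -/
theorem IUp_cond_null_persistence (𝒮 : Set Traj) (k : ℕ) (f : Traj → ℝ≥0∞) :
    IUpOn 𝒮 0 (fun x => IUp 𝒮 k f x) ≤ IUpOn 𝒮 0 f ∧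
    (IUpOn 𝒮 0 f = 0 → AEOn 𝒮 (fun x => IUp 𝒮 k f x = 0)) := by
  have hle : IUpOn 𝒮 0 (fun x => IUp 𝒮 k f x) ≤ IUpOn 𝒮 0 f := IUpOn_IUpOn_cond_le k.zero_le
  exact ⟨hle, fun hf => AEOn_eq_zero_of_IUpOn_eq_zero (nonpos_iff_eq_zero.1 (hf ▸ hle))⟩

end
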